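/- Let N ≥ 1 and p ≥ 1 be integers and let λ = (λ_1 ≥ λ_2 ≥ ⋯ ≥ λ_N) be a tuple of integers with p ≥ λ_1 and λ_N ≥ 0, and let x_1 < x_2 < ⋯ < x_p be the elements of X(λ). Then ∏_{1 ≤ i < j ≤ N} (λ_i − λ_j + j − i)/(j − i) = V(X(λ)) · ∏_{i=1}^{p} 1/(x_i!·(N+p−1−x_i)!) · ∏_{i=1}^{p} (N+i−1)!. -/

import Mathlib

/-!
Put `t = N + p - 1` and `L = {λ_i - i + N}`, the complement of `X` in `[0, t]`. The left-hand
side is `V(L) / ∏_{k<N} k!`, since `∏_{i<j} (j - i)` is itself a Vandermonde product of an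
interval. Writing `C(L, X)` for the product of all distances between `L` and `X`, splitting the
Vandermonde product of `[0, t] = L ∪ X` gives `V([0, t]) = V(L) V(X) C(L, X)`, while the
distances from `b ∈ X` to the other points of `[0, t]` multiply to `b! (t - b)!`, so that
`∏_{b ∈ X} b! (t - b)! = C(L, X) V(X)²`. Eliminating `C(L, X)` leaves
`V(L) ∏_{b ∈ X} b! (t - b)! = V(X) V([0, t])`, and `V([0, t]) = ∏_{k ≤ t} k!`.
-/

open Finset

/-- Vandermonde product of a finite set of integers, as a rational:
`V(S) = ∏_{x,y ∈ S, x < y} (y - x)`. -/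
def vand (S : Finset ℤ) : ℚ :=
  ∏ x ∈ S, ∏ y ∈ S.filter (fun y => x < y), ((y : ℚ) - (x : ℚ))

open scoped Nat

def vandCross (A B : Finset ℤ) : ℚ := ∏ a ∈ A, ∏ b ∈ B, |(b : ℚ) - a|

lemma prod_Ioc_sub_self (c : ℤ) (m : ℕ) : ∏ y ∈ Ioc c (c + m), ((y : ℚ) - c) = m ! := by
  induction m with
  | zero => simp
  | succ m ih =>
    rw [Nat.cast_succ, ← add_assoc, ← insert_Ioc_right_eq_Ioc_add_one (by omega),
      prod_insert (by simp), ih, Nat.factorial_succ]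
    push_cast
    ring

lemma prod_Ico_self_sub (c : ℤ) (m : ℕ) : ∏ y ∈ Ico (c - m) c, ((c : ℚ) - y) = m ! := by
  induction m with
  | zero => simp
  | succ m ih =>
    rw [Nat.cast_succ, ← sub_sub, ← insert_Ico_left_eq_Ico_sub_one (by omega),
      prod_insert (by simp), ih, Nat.factorial_succ]
    push_cast
    ring

lemma prod_filter_lt_comm {α M : Type*} [LinearOrder α] [CommMonoid M] (A B : Finset α)
    (f : α → α → M) :
    ∏ a ∈ A, ∏ b ∈ B.filter (· < a), f a b = ∏ b ∈ B, ∏ a ∈ A.filter (b < ·), f a b :=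
  prod_comm' fun a b => by simp only [mem_filter]; tauto

lemma prod_abs_sub_eq_mul {B : Finset ℤ} {b : ℤ} (hb : b ∉ B) :
    ∏ a ∈ B, |(a : ℚ) - b| =
      (∏ a ∈ B.filter (· < b), ((b : ℚ) - a)) * ∏ a ∈ B.filter (b < ·), ((a : ℚ) - b) := by
  have hgt : B.filter (fun a => ¬ a < b) = B.filter (b < ·) :=
    filter_congr fun a ha => by have := ne_of_mem_of_not_mem ha hb; omega
  rw [← prod_filter_mul_prod_filter_not B (· < b), hgt]
  congr 1 <;> refine prod_congr rfl fun a ha => ?_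
  · have : (a : ℚ) < b := by exact_mod_cast (mem_filter.1 ha).2
    rw [abs_sub_comm, abs_of_pos (sub_pos.2 this)]
  · have : (b : ℚ) < a := by exact_mod_cast (mem_filter.1 ha).2
    rw [abs_of_pos (sub_pos.2 this)]

lemma vandCross_eq {A B : Finset ℤ} (h : Disjoint A B) :
    vandCross A B = (∏ a ∈ A, ∏ b ∈ B.filter (a < ·), ((b : ℚ) - a)) *
      ∏ b ∈ B, ∏ a ∈ A.filter (b < ·), ((a : ℚ) - b) := by
  rw [← prod_filter_lt_comm A B (fun a b => (a : ℚ) - b), ← prod_mul_distrib, vandCross]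
  refine prod_congr rfl fun a ha => ?_
  rw [prod_abs_sub_eq_mul (disjoint_left.1 h ha), mul_comm]

lemma vand_union {A B : Finset ℤ} (h : Disjoint A B) :
    vand (A ∪ B) = vand A * vand B * vandCross A B := by
  have hsplit : ∀ x, ∏ y ∈ (A ∪ B).filter (x < ·), ((y : ℚ) - x) =
      (∏ y ∈ A.filter (x < ·), ((y : ℚ) - x)) * ∏ y ∈ B.filter (x < ·), ((y : ℚ) - x) :=
    fun x => by rw [filter_union, prod_union (disjoint_filter_filter h)]
  simp only [vand, vandCross_eq h, prod_union h, hsplit, prod_mul_distrib]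
  ring

lemma vand_Ico_zero (n : ℕ) : vand (Ico 0 (n : ℤ)) = ∏ k ∈ range n, (k ! : ℚ) := by
  induction n with
  | zero => simp [vand]
  | succ n ih =>
    have hcross : vandCross (Ico 0 (n : ℤ)) {(n : ℤ)} = n ! := by
      rw [← prod_Ico_self_sub (n : ℤ) n, sub_self, vandCross]
      refine prod_congr rfl fun a ha => ?_
      have : (a : ℚ) < (n : ℤ) := by exact_mod_cast (mem_Ico.1 ha).2
      rw [prod_singleton, abs_of_pos (sub_pos.2 this)]
    rw [Nat.cast_succ, ← insert_Ico_right_eq_Ico_add_one (by omega), insert_eq, union_comm,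
      vand_union (by simp), ih, hcross, prod_range_succ]
    simp [vand, filter_singleton]

lemma vand_image {ι : Type*} (s : Finset ι) {f : ι → ℤ} (hf : Set.InjOn f s) :
    vand (s.image f) = ∏ i ∈ s, ∏ j ∈ s.filter (fun j => f i < f j), ((f j : ℚ) - f i) := by
  rw [vand, prod_image hf]
  refine prod_congr rfl fun i _ => ?_
  rw [filter_image, prod_image (hf.mono (filter_subset _ _))]

lemma vand_image_of_strictMono {ι : Type*} [Fintype ι] [LinearOrder ι] {f : ι → ℤ}
    (hf : StrictMono f) :
    vand (univ.image f) = ∏ i, ∏ j ∈ univ.filter (i < ·), ((f j : ℚ) - f i) := by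
  simp only [vand_image _ hf.injective.injOn, hf.lt_iff_lt]

lemma vand_image_of_strictAnti {ι : Type*} [Fintype ι] [LinearOrder ι] {f : ι → ℤ}
    (hf : StrictAnti f) :
    vand (univ.image f) = ∏ i, ∏ j ∈ univ.filter (i < ·), ((f i : ℚ) - f j) := by
  simp only [vand_image _ hf.injective.injOn, hf.lt_iff_gt]
  exact prod_filter_lt_comm _ _ _

lemma prod_fin_sub_eq_prod_factorial (N : ℕ) :
    ∏ i : Fin N, ∏ j ∈ univ.filter (i < ·), (((j : ℕ) : ℚ) - (i : ℕ)) =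
      ∏ k ∈ range N, (k ! : ℚ) := by
  have hmono : StrictMono fun i : Fin N => ((i : ℕ) : ℤ) := fun _ _ h => Nat.cast_lt.mpr h
  have himage : univ.image (fun i : Fin N => ((i : ℕ) : ℤ)) = Ico 0 (N : ℤ) := by
    ext z
    simp only [mem_image, mem_univ, true_and, mem_Ico]
    constructor
    · rintro ⟨i, rfl⟩
      omega
    · intro hz
      exact ⟨⟨z.toNat, by omega⟩, Int.toNat_of_nonneg hz.1⟩
  rw [← vand_Ico_zero, ← himage, vand_image_of_strictMono hmono]
  push_cast
  rfl

lemma prod_div_fin_sub_eq_vand_div {N : ℕ} {l : Fin N → ℤ} (hl : StrictAnti l) :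
    ∏ i : Fin N, ∏ j ∈ univ.filter (i < ·), ((l i : ℚ) - l j) / (((j : ℕ) : ℚ) - (i : ℕ)) =
      vand (univ.image l) / ∏ k ∈ range N, (k ! : ℚ) := by
  simp only [prod_div_distrib, vand_image_of_strictAnti hl, prod_fin_sub_eq_prod_factorial]

lemma prod_erase_Icc_abs_sub {t b : ℤ} (h0 : 0 ≤ b) (ht : b ≤ t) :
    ∏ a ∈ (Icc 0 t).erase b, |(a : ℚ) - b| = b.toNat ! * (t - b).toNat ! := by
  have hlt : ((Icc 0 t).erase b).filter (· < b) = Ico (b - b.toNat) b := by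
    ext; simp only [mem_filter, mem_erase, mem_Icc, mem_Ico]; omega
  have hgt : ((Icc 0 t).erase b).filter (b < ·) = Ioc b (b + (t - b).toNat) := by
    ext; simp only [mem_filter, mem_erase, mem_Icc, mem_Ioc]; omega
  rw [prod_abs_sub_eq_mul (notMem_erase b _), hlt, hgt, prod_Ico_self_sub, prod_Ioc_sub_self]

lemma vand_mul_self (S : Finset ℤ) :
    vand S * vand S = ∏ b ∈ S, ∏ a ∈ S.erase b, |(a : ℚ) - b| := by
  have h : ∀ b ∈ S, ∏ a ∈ S.erase b, |(a : ℚ) - b| =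
      (∏ a ∈ S.filter (· < b), ((b : ℚ) - a)) * ∏ a ∈ S.filter (b < ·), ((a : ℚ) - b) := by
    intro b _
    rw [prod_abs_sub_eq_mul (notMem_erase b S), filter_erase, filter_erase,
      erase_eq_of_notMem (by simp), erase_eq_of_notMem (by simp)]
  rw [prod_congr rfl h, prod_mul_distrib, prod_filter_lt_comm S S (fun b a => (b : ℚ) - a)]
  rfl

lemma prod_factorial_mul_factorial_eq {L X : Finset ℤ} {t : ℤ} (hLX : Disjoint L X)
    (hU : L ∪ X = Icc 0 t) :
    ∏ b ∈ X, (b.toNat ! * (t - b).toNat ! : ℚ) = vandCross L X * (vand X * vand X) := by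
  have h : ∀ b ∈ X, (b.toNat ! * (t - b).toNat ! : ℚ) =
      (∏ a ∈ L, |(a : ℚ) - b|) * ∏ a ∈ X.erase b, |(a : ℚ) - b| := by
    intro b hb
    have hbt := mem_Icc.1 (hU ▸ mem_union_right L hb)
    rw [← prod_erase_Icc_abs_sub hbt.1 hbt.2, ← hU, erase_union_distrib,
      erase_eq_of_notMem (disjoint_right.1 hLX hb),
      prod_union (hLX.mono_right (erase_subset b X))]
  rw [prod_congr rfl h, prod_mul_distrib, vand_mul_self, vandCross, prod_comm]
  simp only [abs_sub_comm]

lemma vand_mul_prod_factorial_eq {L X : Finset ℤ} {t : ℤ} (hLX : Disjoint L X)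
    (hU : L ∪ X = Icc 0 t) :
    vand L * ∏ b ∈ X, (b.toNat ! * (t - b).toNat ! : ℚ) = vand X * vand (Icc 0 t) := by
  rw [prod_factorial_mul_factorial_eq hLX hU, ← hU, vand_union hLX]
  ring

theorem dim_formula_general (N p : ℕ)
    (lam : Fin N → ℤ) (hmono : ∀ i j : Fin N, i ≤ j → lam j ≤ lam i)
    (htop : ∀ i, lam i ≤ p) (hbot : ∀ i, 0 ≤ lam i)
    (x : Fin p → ℤ) (hx : StrictMono x)
    (hX : Finset.image x Finset.univ
      = Finset.Icc (0 : ℤ) ((N : ℤ) + p - 1)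
        \ Finset.image (fun i : Fin N => lam i + N - 1 - (i : ℕ)) Finset.univ) :
    (∏ i : Fin N, ∏ j ∈ Finset.univ.filter (fun j : Fin N => i < j),
        (((lam i - lam j : ℤ) : ℚ) + (j : ℕ) - (i : ℕ)) / ((j : ℕ) - (i : ℕ) : ℚ))
    = vand (Finset.image x Finset.univ)
      * (∏ i : Fin p, (1 : ℚ) / ((Nat.factorial (x i).toNat : ℚ)
          * (Nat.factorial ((N : ℤ) + p - 1 - x i).toNat : ℚ)))
      * ∏ i : Fin p, (Nat.factorial (N + (i : ℕ)) : ℚ) := by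
  set l : Fin N → ℤ := fun i => lam i + N - 1 - (i : ℕ) with hl_def
  have hl : StrictAnti l := fun i j hij => by
    have := hmono i j hij.le
    have : (i : ℕ) < j := hij
    show lam j + N - 1 - (j : ℕ) < lam i + N - 1 - (i : ℕ)
    omega
  have hL : univ.image l ⊆ Icc 0 ((N : ℤ) + p - 1) := by
    intro z hz
    obtain ⟨i, -, rfl⟩ := mem_image.1 hz
    have := htop i
    have := hbot i
    have := i.isLt
    rw [mem_Icc]
    show 0 ≤ lam i + N - 1 - (i : ℕ) ∧ lam i + N - 1 - (i : ℕ) ≤ N + p - 1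
    omega
  have hU : univ.image l ∪ univ.image x = Icc 0 ((N : ℤ) + p - 1) := by
    rw [hX]; exact union_sdiff_of_subset hL
  have hLX : Disjoint (univ.image l) (univ.image x) := by rw [hX]; exact disjoint_sdiff
  have hIcc : vand (Icc 0 ((N : ℤ) + p - 1)) =
      (∏ k ∈ range N, (k ! : ℚ)) * ∏ i : Fin p, ((N + i) ! : ℚ) := by
    rw [Icc_sub_one_right_eq_Ico, ← Nat.cast_add, vand_Ico_zero, prod_range_add,
      Fin.prod_univ_eq_prod_range (fun i => ((N + i) ! : ℚ))]
  have hduality := vand_mul_prod_factorial_eq hLX hU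
  rw [prod_image hx.injective.injOn, hIcc] at hduality
  have hnum : ∀ i j : Fin N, (((lam i - lam j : ℤ) : ℚ) + (j : ℕ) - (i : ℕ)) = (l i : ℚ) - l j :=
    fun i j => by simp only [hl_def]; push_cast; ring
  simp only [hnum, prod_div_fin_sub_eq_vand_div hl, one_div, prod_inv_distrib]
  have hsf : (∏ k ∈ range N, (k ! : ℚ)) ≠ 0 := by positivity
  have hfact : ∏ i : Fin p, ((x i).toNat ! * ((N : ℤ) + p - 1 - x i).toNat ! : ℚ) ≠ 0 := by
    positivity
  field_simp
  linear_combination hduality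

/-- Weyl's dimension formula for `Dim(λ)` in terms of the point
configuration `X(λ) = {0,…,N+p−1} \ {λ_i − i + N}` (whose elements, listed
increasingly, are `x 0 < x 1 < ⋯ < x (p-1)`; here `lam i` stands for `λ_{i+1}`):
`∏_{1 ≤ i < j ≤ N} (λ_i − λ_j + j − i)/(j − i)
  = V(X(λ)) · ∏_{i=1}^{p} 1/(x_i!·(N+p−1−x_i)!) · ∏_{i=1}^{p} (N+i−1)!`. -/
theorem dim_formula (N p : ℕ) (hN : 1 ≤ N) (hp : 1 ≤ p)
    (lam : Fin N → ℤ) (hmono : ∀ i j : Fin N, i ≤ j → lam j ≤ lam i)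
    (htop : ∀ i, lam i ≤ p) (hbot : ∀ i, 0 ≤ lam i)
    (x : Fin p → ℤ) (hx : StrictMono x)
    (hX : Finset.image x Finset.univ
      = Finset.Icc (0 : ℤ) ((N : ℤ) + p - 1)
        \ Finset.image (fun i : Fin N => lam i + N - 1 - (i : ℕ)) Finset.univ) :
    (∏ i : Fin N, ∏ j ∈ Finset.univ.filter (fun j : Fin N => i < j),
        (((lam i - lam j : ℤ) : ℚ) + (j : ℕ) - (i : ℕ)) / ((j : ℕ) - (i : ℕ) : ℚ))
    = vand (Finset.image x Finset.univ)
      * (∏ i : Fin p, (1 : ℚ) / ((Nat.factorial (x i).toNat : ℚ)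
          * (Nat.factorial ((N : ℤ) + p - 1 - x i).toNat : ℚ)))
      * ∏ i : Fin p, (Nat.factorial (N + (i : ℕ)) : ℚ) :=
  dim_formula_general N p lam hmono htop hbot x hx hX
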